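/- Optimistic prefix cost of appendA: for any n with 1 <= n <= sizeX 0 xsA, there exists an execution of appendA xsA ysA producing a result zsA with sizeX 0 (Thunk zsA) = n and cost at most n. -/
import Mathlib


namespace Clair

/-- The clairvoyance monad: sets of value-cost pairs. -/
def M (a : Type) : Type := a → Nat → Prop

def ret {a : Type} (x : a) : M a := fun y n => y = x ∧ n = 0

def bind {a b : Type} (u : M a) (k : a → M b) : M b :=
  fun y n => ∃ x nx ny, u x nx ∧ k x y ny ∧ n = nx + ny

def tick : M Unit := fun _ n => n = 1

inductive T (a : Type) : Type
  | Thunk (v : a) : T a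
  | Undefined : T a

def thunk {a : Type} (u : M a) : M (T a) := fun t n =>
  match t with
  | .Thunk v => u v n
  | .Undefined => n = 0

def forcing {a b : Type} (t : T a) (k : a → M b) : M b :=
  match t with
  | .Thunk v => k v
  | .Undefined => fun _ _ => False

/-- `t >>! s` is `t >> s` in the paper: `bind t (fun _ => s)`. -/
def seqM {a b : Type} (t : M a) (s : M b) : M b := bind t (fun _ => s)

infixl:55 " >>! " => seqM

def pessimistic {a : Type} (u : M a) (r : a → Nat → Prop) : Prop :=
  ∀ x n, u x n → r x n

def optimistic {a : Type} (u : M a) (r : a → Nat → Prop) : Prop :=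
  ∃ x n, u x n ∧ r x n

inductive listA (a : Type) : Type
  | NilA : listA a
  | ConsA (x : T a) (xs : T (listA a)) : listA a

/-- Lifting a relation through the thunk type `T` (for `less_defined`). -/
inductive LDT {a : Type} (ld : a → a → Prop) : T a → T a → Prop
  | undef : ∀ t, LDT ld T.Undefined t
  | thunk : ∀ {x y}, ld x y → LDT ld (T.Thunk x) (T.Thunk y)

inductive less_defined {a : Type} : listA a → listA a → Prop
  | nil : less_defined .NilA .NilA
  | cons : ∀ {x y : T a} {xs ys : T (listA a)},
      LDT Eq x y → LDT less_defined xs ys →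
      less_defined (.ConsA x xs) (.ConsA y ys)

def exactA {a : Type} : List a → listA a
  | [] => .NilA
  | x :: xs => .ConsA (.Thunk x) (.Thunk (exactA xs))

/-- Lifting a relation through `T` on the left only (for `is_approx`). -/
inductive TA {a b : Type} (R : a → b → Prop) : T a → b → Prop
  | undef : ∀ y, TA R T.Undefined y
  | thunk : ∀ {x y}, R x y → TA R (T.Thunk x) y

inductive is_approx {a : Type} : listA a → List a → Prop
  | nil : is_approx .NilA []
  | cons : ∀ {xA : T a} {x : a} {xsA : T (listA a)} {xs : List a},
      TA Eq xA x → TA is_approx xsA xs →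
      is_approx (.ConsA xA xsA) (x :: xs)

def sizeX' {a : Type} (n0 : Nat) : listA a → Nat
  | .NilA => n0
  | .ConsA _ (.Thunk xs) => sizeX' n0 xs + 1
  | .ConsA _ .Undefined => 1

def sizeX {a : Type} (n0 : Nat) : T (listA a) → Nat
  | .Thunk xs => sizeX' n0 xs
  | .Undefined => 0

def appendA_ {a : Type} : listA a → T (listA a) → M (listA a)
  | .NilA, ysA => tick >>! forcing ysA ret
  | .ConsA x xs1, ysA =>
      tick >>! bind (thunk (match xs1 with
          | .Thunk xs1' => appendA_ xs1' ysA
          | .Undefined => fun _ _ => False))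
        (fun t => ret (.ConsA x t))

def appendA {a : Type} (xsA ysA : T (listA a)) : M (listA a) :=
  forcing xsA (fun xs => appendA_ xs ysA)

def takeA_ {a : Type} : Nat → listA a → M (listA a)
  | 0, _ => tick >>! ret .NilA
  | _ + 1, .NilA => tick >>! ret .NilA
  | n + 1, .ConsA x xs1 =>
      tick >>! bind (thunk (match xs1 with
          | .Thunk xs1' => takeA_ n xs1'
          | .Undefined => fun _ _ => False))
        (fun t => ret (.ConsA x t))

def takeA {a : Type} (n : Nat) (xsA : T (listA a)) : M (listA a) :=
  forcing xsA (fun xs => takeA_ n xs)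

/-- Cost-free monadic reversal (the `rev` whose cost is axiomatized to 0). -/
def revA_ {a : Type} : listA a → T (listA a) → M (listA a)
  | .NilA, acc => forcing acc ret
  | .ConsA x xs1, acc =>
      match xs1 with
      | .Thunk xs1' => revA_ xs1' (.Thunk (.ConsA x acc))
      | .Undefined => fun _ _ => False

def revA {a : Type} (xsA : T (listA a)) : M (listA a) :=
  forcing xsA (fun xs => revA_ xs (.Thunk .NilA))

/-- Tail-recursive `take'` translated to the clairvoyance monad,
    with one tick per call and a zero-cost `rev`. -/
def take'A_ {a : Type} : T (listA a) → Nat → listA a → M (listA a)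
  | ysA, 0, _ => tick >>! revA ysA
  | ysA, _ + 1, .NilA => tick >>! revA ysA
  | ysA, n + 1, .ConsA x xs1 =>
      tick >>! (match xs1 with
        | .Thunk xs1' => take'A_ (.Thunk (.ConsA x ysA)) n xs1'
        | .Undefined => fun _ _ => False)

end Clair

open Clair in
theorem appendA_prefix_aux {a : Type} (ysA : T (listA a)) :
    ∀ (n : Nat) (xs : listA a), 1 ≤ n → n ≤ sizeX' 0 xs →
      ∃ z c, appendA_ xs ysA z c ∧ sizeX' 0 z = n ∧ c ≤ n := by
  intro n
  induction n with
  | zero => intro xs h; omega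
  | succ m ih =>
    intro xs _ h2
    cases xs with
    | NilA => simp [sizeX'] at h2
    | ConsA x xs1 =>
      cases m with
      | zero =>
        refine ⟨.ConsA x .Undefined, 1, ?_, rfl, le_refl _⟩
        unfold appendA_
        exact ⟨(), 1, 0, rfl, ⟨.Undefined, 0, 0, rfl, ⟨rfl, rfl⟩, rfl⟩, rfl⟩
      | succ k =>
        cases xs1 with
        | Undefined => simp [sizeX'] at h2
        | Thunk xs1' =>
          have h2' : k + 1 ≤ sizeX' 0 xs1' := by simp [sizeX'] at h2; omega
          obtain ⟨z, c, hz, hs, hc⟩ := ih xs1' (Nat.succ_le_succ (Nat.zero_le k)) h2'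
          refine ⟨.ConsA x (.Thunk z), 1 + c, ?_, ?_, by omega⟩
          · unfold appendA_
            exact ⟨(), 1, c, rfl, ⟨.Thunk z, c, 0, hz, ⟨rfl, rfl⟩, rfl⟩, rfl⟩
          · simp [sizeX', hs]

open Clair in
/-- Optimistic prefix cost of `appendA`: for any demand `1 ≤ n ≤ sizeX 0 xsA`,
some execution yields an approximation of size `n` at cost at most `n`. -/
theorem appendA_prefix_cost {a : Type} (xsA ysA : T (listA a)) (n : Nat)
    (H1 : 1 ≤ n) (H2 : n ≤ sizeX 0 xsA) :
    optimistic (appendA xsA ysA)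
      (fun zsA c => sizeX 0 (T.Thunk zsA) = n ∧ c ≤ n) := by
  cases xsA with
  | Undefined => simp [sizeX] at H2; omega
  | Thunk xs =>
    obtain ⟨z, c, hz, hs, hc⟩ := appendA_prefix_aux ysA n xs H1 H2
    exact ⟨z, c, hz, hs, hc⟩
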